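/- For λ ∈ H (i.e., λ(s_i) = t, λ(t_j) = t², λ = 1 elsewhere) the character χ satisfies χ(λ) = t². Consequently each f_i = ∑_{m ∈ K_{(1)}, ⟨m,t_i⟩=1} c(m) ∏_{n ≠ t_i} z(n)^{⟨m,n⟩} is H-invariant, while z(t_i)f_i is H-semiinvariant with weight t². -/

import Mathlib

open Finset

/-!
Pairing `2 • degv = ∑ s_l + 2 • ∑ t_j` with any `m` shows that
`∏_{n ∈ B} λ(n)^⟨m,n⟩ = t^(2⟨m,degv⟩)`. For `m = α` this is `χ(λ) = t²`. For `m ∈ K_(1)` with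
`⟨m,t_i⟩ = 1` the factor at `t_i` alone already equals `t²`, so the remaining factors of each
monomial of `f_i` multiply to `1`.
-/

variable {ι : Type*} [Fintype ι]

/-- Real dot pairing between `M_ℝ` and `N_ℝ` (identified via the standard basis). -/
def dotR (x y : ι → ℝ) : ℝ := ∑ i, x i * y i

/-- Integral pairing between the lattice `M` and its dual `N`. -/
def dotZ (x y : ι → ℤ) : ℤ := ∑ i, x i * y i

/-- Embedding of lattice points into the real vector space. -/
def toR (m : ι → ℤ) : ι → ℝ := fun i => (m i : ℝ)

/-- The rational polyhedral cone generated by a finite set of lattice points. -/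
def coneGen (S : Finset (ι → ℤ)) : Set (ι → ℝ) :=
  {x | ∃ c : (ι → ℤ) → ℝ, (∀ s, 0 ≤ c s) ∧ x = ∑ s ∈ S, c s • toR s}

/-- The dual cone. -/
def dualCone (K : Set (ι → ℝ)) : Set (ι → ℝ) :=
  {y | ∀ x ∈ K, 0 ≤ dotR x y}

theorem zpow_sum₀ {β G₀ : Type*} [CommGroupWithZero G₀] {t : G₀} (ht : t ≠ 0)
    (S : Finset β) (f : β → ℤ) : t ^ (∑ b ∈ S, f b) = ∏ b ∈ S, t ^ f b := by
  classical
  induction S using Finset.induction with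
  | empty => simp
  | insert b S hb ih => rw [sum_insert hb, prod_insert hb, zpow_add₀ ht, ih]

theorem prod_zpow_eq_zpow_sum_of_injective {κ β G₀ : Type*} [Fintype κ] [DecidableEq β]
    [CommGroupWithZero G₀] {B : Finset β} {e : κ → β} (he : Function.Injective e)
    (heB : ∀ k, e k ∈ B) {L : β → G₀} {t : G₀} (ht : t ≠ 0) {w : κ → ℤ}
    (hLe : ∀ k, L (e k) = t ^ w k) (hLo : ∀ n ∈ B, (∀ k, e k ≠ n) → L n = 1) (f : β → ℤ) :
    ∏ n ∈ B, L n ^ f n = t ^ ∑ k, w k * f (e k) := by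
  have himage : univ.image e ⊆ B := by
    simpa [Finset.subset_iff] using heB
  rw [← prod_subset himage fun n hnB hn => by
    rw [hLo n hnB fun k hk => hn (by simp [← hk]), one_zpow]]
  rw [prod_image he.injOn, zpow_sum₀ ht]
  exact prod_congr rfl fun k _ => by rw [hLe, zpow_mul]

open Matrix in
theorem dotZ_eq_dotProduct (x y : ι → ℤ) : dotZ x y = x ⬝ᵥ y := rfl

open Matrix in
theorem prod_zpow_dotZ_of_decomp {r d : ℕ} {B : Finset (ι → ℤ)} {degv : ι → ℤ}
    {s : Fin r → ι → ℤ} {ts : Fin d → ι → ℤ} {L : (ι → ℤ) → ℂ} {t : ℂ} (ht : t ≠ 0)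
    (hsB : ∀ l, s l ∈ B) (htB : ∀ j, ts j ∈ B) (hinj : Function.Injective (Sum.elim s ts))
    (hdecomp : (2 : ℤ) • degv = (∑ l, s l) + (2 : ℤ) • ∑ j, ts j)
    (hLs : ∀ l, L (s l) = t) (hLt : ∀ j, L (ts j) = t ^ 2)
    (hLo : ∀ n ∈ B, (∀ l, s l ≠ n) → (∀ j, ts j ≠ n) → L n = 1) (m : ι → ℤ) :
    ∏ n ∈ B, L n ^ dotZ m n = t ^ (2 * dotZ m degv) := by
  have hprod := prod_zpow_eq_zpow_sum_of_injective hinj (Sum.forall.2 ⟨hsB, htB⟩) ht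
    (w := Sum.elim 1 2) (Sum.forall.2 ⟨fun l => by simp [hLs], fun j => by simp [hLt]⟩)
    (fun n hn hne => hLo n hn (fun l => hne (.inl l)) (fun j => hne (.inr j))) (dotZ m)
  rw [hprod, Fintype.sum_sum_type]
  congr 1
  have h := congrArg (m ⬝ᵥ ·) hdecomp
  simp only [dotProduct_smul, dotProduct_add, dotProduct_sum, smul_eq_mul] at h
  simp only [dotZ_eq_dotProduct, Sum.elim_inl, Sum.elim_inr, Pi.ofNat_apply, one_mul,
    ← mul_sum, h]

theorem prod_erase_zpow_dotZ_eq_one {r d : ℕ} {B : Finset (ι → ℤ)} {degv : ι → ℤ}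
    {s : Fin r → ι → ℤ} {ts : Fin d → ι → ℤ} {L : (ι → ℤ) → ℂ} {t : ℂ} (ht : t ≠ 0)
    (hsB : ∀ l, s l ∈ B) (htB : ∀ j, ts j ∈ B) (hinj : Function.Injective (Sum.elim s ts))
    (hdecomp : (2 : ℤ) • degv = (∑ l, s l) + (2 : ℤ) • ∑ j, ts j)
    (hLs : ∀ l, L (s l) = t) (hLt : ∀ j, L (ts j) = t ^ 2)
    (hLo : ∀ n ∈ B, (∀ l, s l ≠ n) → (∀ j, ts j ≠ n) → L n = 1) {m : ι → ℤ}
    (hm : dotZ m degv = 1) (i : Fin d) (hmi : dotZ m (ts i) = 1) :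
    ∏ n ∈ B.erase (ts i), L n ^ dotZ m n = 1 := by
  have h := mul_prod_erase B (fun n => L n ^ dotZ m n) (htB i)
  rw [prod_zpow_dotZ_of_decomp ht hsB htB hinj hdecomp hLs hLt hLo, hm, hLt, hmi, zpow_one,
    mul_one] at h
  exact (mul_eq_left₀ (pow_ne_zero 2 ht)).1 (by exact_mod_cast h)

theorem stmt_17_general (A B : Finset (ι → ℤ)) (degv α : ι → ℤ) (r d : ℕ)
    (s : Fin (2 * r) → ι → ℤ) (ts : Fin d → ι → ℤ)
    (c : (ι → ℤ) → ℂ) (t : ℂ) (ht : t ≠ 0)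
    (hsB : ∀ l, s l ∈ B) (htB : ∀ j, ts j ∈ B)
    (hinj : Function.Injective (Sum.elim s ts))
    (hdecomp : (2 : ℤ) • degv = (∑ l, s l) + (2 : ℤ) • ∑ j, ts j)
    (hA1 : ∀ m ∈ A, dotZ m degv = 1)
    (hα : dotZ α degv = 1)
    (L : (ι → ℤ) → ℂ)
    (hLs : ∀ l, L (s l) = t)
    (hLt : ∀ j, L (ts j) = t ^ 2)
    (hLo : ∀ n ∈ B, (∀ l, s l ≠ n) → (∀ j, ts j ≠ n) → L n = 1)
    (i : Fin d) :
    (∏ n ∈ B, L n ^ dotZ α n = t ^ 2) ∧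
    (∀ z : (ι → ℤ) → ℂ,
      (∑ m ∈ A.filter fun m => dotZ m (ts i) = 1,
          c m * ∏ n ∈ B.erase (ts i), (L n * z n) ^ dotZ m n)
        = ∑ m ∈ A.filter fun m => dotZ m (ts i) = 1,
            c m * ∏ n ∈ B.erase (ts i), z n ^ dotZ m n) ∧
    (∀ z : (ι → ℤ) → ℂ,
      (L (ts i) * z (ts i)) *
          ∑ m ∈ A.filter fun m => dotZ m (ts i) = 1,
            c m * ∏ n ∈ B.erase (ts i), (L n * z n) ^ dotZ m n
        = t ^ 2 *
            (z (ts i) *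
              ∑ m ∈ A.filter fun m => dotZ m (ts i) = 1,
                c m * ∏ n ∈ B.erase (ts i), z n ^ dotZ m n)) := by
  have hinv (z : (ι → ℤ) → ℂ) :
      ∑ m ∈ A.filter fun m => dotZ m (ts i) = 1,
          c m * ∏ n ∈ B.erase (ts i), (L n * z n) ^ dotZ m n
        = ∑ m ∈ A.filter fun m => dotZ m (ts i) = 1,
            c m * ∏ n ∈ B.erase (ts i), z n ^ dotZ m n := by
    refine sum_congr rfl fun m hm => ?_
    obtain ⟨hmA, hmi⟩ := mem_filter.1 hm
    simp only [mul_zpow, prod_mul_distrib]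
    rw [prod_erase_zpow_dotZ_eq_one ht hsB htB hinj hdecomp hLs hLt hLo
      (hA1 m hmA) i hmi, one_mul]
  refine ⟨?_, hinv, fun z => by rw [hinv z, hLt]; ring⟩
  rw [prod_zpow_dotZ_of_decomp ht hsB htB hinj hdecomp hLs hLt hLo, hα]
  exact_mod_cast zpow_natCast t 2

/-- for `λ ∈ H` (i.e. `λ(s_l) = t`, `λ(t_j) = t²`, `λ = 1`
elsewhere) the character satisfies `χ(λ) = t²`; consequently each
`f_i = ∑_{m ∈ K_{(1)}, ⟨m,t_i⟩=1} c(m) ∏_{n ≠ t_i} z(n)^{⟨m,n⟩}` is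
`H`-invariant, while `z(t_i) f_i` is `H`-semiinvariant of weight `t²`. -/
theorem stmt_17 (A B : Finset (ι → ℤ)) (degv α : ι → ℤ) (r d : ℕ)
    (s : Fin (2 * r) → ι → ℤ) (ts : Fin d → ι → ℤ)
    (c : (ι → ℤ) → ℂ) (t : ℂ) (ht : t ≠ 0)
    (hsB : ∀ l, s l ∈ B) (htB : ∀ j, ts j ∈ B)
    (hinj : Function.Injective (Sum.elim s ts))
    (hdecomp : (2 : ℤ) • degv = (∑ l, s l) + (2 : ℤ) • ∑ j, ts j)
    (hA1 : ∀ m ∈ A, dotZ m degv = 1)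
    (hnn : ∀ m ∈ A, ∀ n ∈ B, 0 ≤ dotZ m n)
    (hα : dotZ α degv = 1)
    (L : (ι → ℤ) → ℂ)
    (hLs : ∀ l, L (s l) = t)
    (hLt : ∀ j, L (ts j) = t ^ 2)
    (hLo : ∀ n ∈ B, (∀ l, s l ≠ n) → (∀ j, ts j ≠ n) → L n = 1)
    (i : Fin d) :
    (∏ n ∈ B, L n ^ dotZ α n = t ^ 2) ∧
    (∀ z : (ι → ℤ) → ℂ,
      (∑ m ∈ A.filter fun m => dotZ m (ts i) = 1,
          c m * ∏ n ∈ B.erase (ts i), (L n * z n) ^ dotZ m n)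
        = ∑ m ∈ A.filter fun m => dotZ m (ts i) = 1,
            c m * ∏ n ∈ B.erase (ts i), z n ^ dotZ m n) ∧
    (∀ z : (ι → ℤ) → ℂ,
      (L (ts i) * z (ts i)) *
          ∑ m ∈ A.filter fun m => dotZ m (ts i) = 1,
            c m * ∏ n ∈ B.erase (ts i), (L n * z n) ^ dotZ m n
        = t ^ 2 *
            (z (ts i) *
              ∑ m ∈ A.filter fun m => dotZ m (ts i) = 1,
                c m * ∏ n ∈ B.erase (ts i), z n ^ dotZ m n)) :=
  stmt_17_general A B degv α r d s ts c t ht hsB htB hinj hdecomp hA1 hα L hLs hLt hLo i
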